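/- Let n1,n2,n3,α0,α1,α2,α3 ∈ ℂ with each n_i ≠ 0, 2n1n2n3−(n1+n2)n3−2(n1+n2) = 0 and 2n1n2−n1−n2 ≠ 0. Let U ⊆ ℂ be open with 0 ∉ U and δ(t) ≠ 0 for t ∈ U, and let x, y : ℂ → ℂ be differentiable on U with y(t) ≠ 0 for t ∈ U, satisfying the generalized Painlevé V system with parameters (n1,n2,n3; α0,α1,α2,α3) on U. Then x̃ := x + α2/y and ỹ := y satisfy the generalized Painlevé V system on U with parameters (n1,n2,n3; α0+α2−n1α2, α1+α2−n2α2, −α2, (2(α2+α3)n1n2−(3α2+α3)n1−(3α2+α3)n2)/(2n1n2−n1−n2)), provided the quantity δ(t) formed from these new parameters is nonzero on U. -/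

import Mathlib

/-- The function `δ(t)` of the generalized Painlevé V system. -/
noncomputable def pvDelta (n1 n2 b0 b1 b2 b3 : ℂ) (t : ℂ) : ℂ :=
  t * (2 * n2 * b0 + 2 * n1 * b1 - 2 * (n1 + n2) * b2
    + 2 * (2 * n1 * n2 - n1 - n2) * b3 - (n1 - n2) * t)

/-- `x, y : ℂ → ℂ` are differentiable on `U` and satisfy the generalized
Painlevé V system with parameters `(n1,n2,n3; b0,b1,b2,b3)` on `U`. -/
def PVSystem (n1 n2 n3 b0 b1 b2 b3 : ℂ) (U : Set ℂ) (x y : ℂ → ℂ) : Prop :=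
  DifferentiableOn ℂ x U ∧ DifferentiableOn ℂ y U ∧
  ∀ t ∈ U,
    (pvDelta n1 n2 b0 b1 b2 b3 t * deriv x t =
      2 * n1 * n2 * (x t) ^ 3 * y t - 2 * n1 * n2 * (x t) ^ 2 * y t
      - 2 * n1 * (b1 - n2 * b2) * (x t) ^ 2
      + (2 * n2 * b0 + 2 * n1 * b1 - 2 * n1 * n2 * b2 + (n1 + n2) * t) * x t
      - (n1 + n2) * t)
    ∧
    (pvDelta n1 n2 b0 b1 b2 b3 t * deriv y t =
      -(2 * n1) * (2 * n2 - 1) * (x t) ^ 2 * (y t) ^ 2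
      + 2 * (2 * n1 * n2 - n1 - n2) * x t * (y t) ^ 2
      + 2 * n1 * (2 * b1 - (3 * n2 - 2) * b2) * x t * y t
      - (2 * n2 * b0 + 2 * n1 * b1 - 2 * (2 * n1 * n2 - n1 - n2) * b2 + (n1 + n2) * t) * y t
      + 2 * n1 * b2 * (b1 + b2 - n2 * b2))

/-!
The substitution `x ↦ x + α₂/y` fixes `y`, so `x̃' = x' - α₂ y'/y²`. Substituting it into the
right-hand sides of the system, the new `x`-field equals the old `x`-field minus `α₂/y²` times the
old `y`-field, and the new `y`-field equals the old one; both are rational identities in `(x, y)`.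
The parameter change is chosen so that it leaves `δ(t)` unchanged.
-/

def pvFieldX (n1 n2 b0 b1 b2 t X Y : ℂ) : ℂ :=
  2 * n1 * n2 * X ^ 3 * Y - 2 * n1 * n2 * X ^ 2 * Y
    - 2 * n1 * (b1 - n2 * b2) * X ^ 2
    + (2 * n2 * b0 + 2 * n1 * b1 - 2 * n1 * n2 * b2 + (n1 + n2) * t) * X
    - (n1 + n2) * t

def pvFieldY (n1 n2 b0 b1 b2 t X Y : ℂ) : ℂ :=
  -(2 * n1) * (2 * n2 - 1) * X ^ 2 * Y ^ 2
    + 2 * (2 * n1 * n2 - n1 - n2) * X * Y ^ 2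
    + 2 * n1 * (2 * b1 - (3 * n2 - 2) * b2) * X * Y
    - (2 * n2 * b0 + 2 * n1 * b1 - 2 * (2 * n1 * n2 - n1 - n2) * b2 + (n1 + n2) * t) * Y
    + 2 * n1 * b2 * (b1 + b2 - n2 * b2)

theorem pvSystem_iff {n1 n2 n3 b0 b1 b2 b3 : ℂ} {U : Set ℂ} {x y : ℂ → ℂ} :
    PVSystem n1 n2 n3 b0 b1 b2 b3 U x y ↔
      DifferentiableOn ℂ x U ∧ DifferentiableOn ℂ y U ∧
      ∀ t ∈ U,
        pvDelta n1 n2 b0 b1 b2 b3 t * deriv x t = pvFieldX n1 n2 b0 b1 b2 t (x t) (y t) ∧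
        pvDelta n1 n2 b0 b1 b2 b3 t * deriv y t = pvFieldY n1 n2 b0 b1 b2 t (x t) (y t) :=
  Iff.rfl

section SymmetryS

variable {n1 n2 a0 a1 a2 a3 t X Y : ℂ}

theorem pvDelta_symmetry_s (hC : 2 * n1 * n2 - n1 - n2 ≠ 0) :
    pvDelta n1 n2 (a0 + a2 - n1 * a2) (a1 + a2 - n2 * a2) (-a2)
      ((2 * (a2 + a3) * n1 * n2 - (3 * a2 + a3) * n1 - (3 * a2 + a3) * n2)
        / (2 * n1 * n2 - n1 - n2)) t = pvDelta n1 n2 a0 a1 a2 a3 t := by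
  unfold pvDelta
  rw [mul_assoc 2 (2 * n1 * n2 - n1 - n2), mul_div_cancel₀ _ hC]
  ring

theorem pvFieldX_symmetry_s (hY : Y ≠ 0) :
    pvFieldX n1 n2 (a0 + a2 - n1 * a2) (a1 + a2 - n2 * a2) (-a2) t (X + a2 / Y) Y =
      pvFieldX n1 n2 a0 a1 a2 t X Y - a2 * pvFieldY n1 n2 a0 a1 a2 t X Y / Y ^ 2 := by
  unfold pvFieldX pvFieldY
  field_simp
  ring

theorem pvFieldY_symmetry_s (hY : Y ≠ 0) :
    pvFieldY n1 n2 (a0 + a2 - n1 * a2) (a1 + a2 - n2 * a2) (-a2) t (X + a2 / Y) Y =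
      pvFieldY n1 n2 a0 a1 a2 t X Y := by
  unfold pvFieldY
  field_simp
  ring

end SymmetryS

theorem HasDerivAt.add_const_div {𝕜 : Type*} [NontriviallyNormedField 𝕜] {x y : 𝕜 → 𝕜}
    {x' y' t : 𝕜} (a : 𝕜) (hx : HasDerivAt x x' t) (hy : HasDerivAt y y' t) (hyt : y t ≠ 0) :
    HasDerivAt (fun s => x s + a / y s) (x' - a * y' / y t ^ 2) t :=
  (hx.add ((hasDerivAt_const t a).fun_div hy hyt)).congr_deriv (by ring)

theorem pv_symmetry_s_general (n1 n2 n3 a0 a1 a2 a3 : ℂ)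
    (hC : 2 * n1 * n2 - n1 - n2 ≠ 0)
    (U : Set ℂ) (hU : IsOpen U)
    (x y : ℂ → ℂ) (hy : ∀ t ∈ U, y t ≠ 0)
    (hxy : PVSystem n1 n2 n3 a0 a1 a2 a3 U x y) :
    PVSystem n1 n2 n3 (a0 + a2 - n1 * a2) (a1 + a2 - n2 * a2) (-a2)
      ((2 * (a2 + a3) * n1 * n2 - (3 * a2 + a3) * n1 - (3 * a2 + a3) * n2)
        / (2 * n1 * n2 - n1 - n2)) U
      (fun t => x t + a2 / y t) y := by
  obtain ⟨hxd, hyd, hode⟩ := pvSystem_iff.mp hxy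
  refine pvSystem_iff.mpr ⟨hxd.add ((differentiableOn_const a2).div hyd hy), hyd, fun t ht => ?_⟩
  obtain ⟨hx', hy'⟩ := hode t ht
  have hderiv : deriv (fun s => x s + a2 / y s) t = deriv x t - a2 * deriv y t / y t ^ 2 :=
    (HasDerivAt.add_const_div a2 ((hxd.differentiableAt (hU.mem_nhds ht)).hasDerivAt)
      ((hyd.differentiableAt (hU.mem_nhds ht)).hasDerivAt) (hy t ht)).deriv
  rw [pvDelta_symmetry_s hC, hderiv, pvFieldX_symmetry_s (hy t ht), pvFieldY_symmetry_s (hy t ht),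
    ← hx', ← hy']
  exact ⟨by ring, rfl⟩

/-- Birational symmetry `s` of the generalized Painlevé V system:
`(x, y) ↦ (x + α2/y, y)` with the indicated parameter change. -/
theorem pv_symmetry_s (n1 n2 n3 a0 a1 a2 a3 : ℂ)
    (hn1 : n1 ≠ 0) (hn2 : n2 ≠ 0) (hn3 : n3 ≠ 0)
    (hrel : 2 * n1 * n2 * n3 - (n1 + n2) * n3 - 2 * (n1 + n2) = 0)
    (hC : 2 * n1 * n2 - n1 - n2 ≠ 0)
    (U : Set ℂ) (hU : IsOpen U) (h0U : (0 : ℂ) ∉ U)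
    (hδ : ∀ t ∈ U, pvDelta n1 n2 a0 a1 a2 a3 t ≠ 0)
    (x y : ℂ → ℂ) (hy : ∀ t ∈ U, y t ≠ 0)
    (hxy : PVSystem n1 n2 n3 a0 a1 a2 a3 U x y)
    (hδ' : ∀ t ∈ U, pvDelta n1 n2 (a0 + a2 - n1 * a2) (a1 + a2 - n2 * a2) (-a2)
        ((2 * (a2 + a3) * n1 * n2 - (3 * a2 + a3) * n1 - (3 * a2 + a3) * n2)
          / (2 * n1 * n2 - n1 - n2)) t ≠ 0) :
    PVSystem n1 n2 n3 (a0 + a2 - n1 * a2) (a1 + a2 - n2 * a2) (-a2)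
      ((2 * (a2 + a3) * n1 * n2 - (3 * a2 + a3) * n1 - (3 * a2 + a3) * n2)
        / (2 * n1 * n2 - n1 - n2)) U
      (fun t => x t + a2 / y t) y :=
  pv_symmetry_s_general n1 n2 n3 a0 a1 a2 a3 hC U hU x y hy hxy
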